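/- arXiv:2207.07294 — 12 statements merged into one kernel-verified Lean document; each statement's English description precedes it below -/
import Mathlib

section
/- Let G be a graph on n vertices, A ∈ S(G), B ∈ S(complement of G) with AB = O. Then for each index i, a_ii = 0 or b_ii = 0. -/
/-- `A ∈ S(G)`: real symmetric matrix whose off-diagonal nonzero pattern is `E(G)`. -/
def MatIn {V : Type*} [Fintype V] (G : SimpleGraph V) (A : Matrix V V ℝ) : Prop :=
  A.IsSymm ∧ ∀ i j : V, i ≠ j → (A i j ≠ 0 ↔ G.Adj i j)

/-- `G` is complementary vanishing. -/
def CompVan {V : Type*} [Fintype V] (G : SimpleGraph V) : Prop :=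
  ∃ A B : Matrix V V ℝ, MatIn G A ∧ MatIn Gᶜ B ∧ A * B = 0

theorem Matrix.mul_apply_diag_of_forall_ne {V R : Type*} [Fintype V] [NonUnitalNonAssocSemiring R]
    {A B : Matrix V V R} {i : V} (h : ∀ k, k ≠ i → A i k = 0 ∨ B k i = 0) :
    (A * B) i i = A i i * B i i := by
  rw [Matrix.mul_apply]
  refine Finset.sum_eq_single i (fun k _ hk => ?_) (fun hi => absurd (Finset.mem_univ i) hi)
  rcases h k hk with hA | hB
  · rw [hA, zero_mul]
  · rw [hB, mul_zero]

theorem MatIn.apply_eq_zero_or_compl_apply_eq_zero {V : Type*} [Fintype V] {G : SimpleGraph V}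
    {A B : Matrix V V ℝ} (hA : MatIn G A) (hB : MatIn Gᶜ B) {i k : V} (hki : k ≠ i) :
    A i k = 0 ∨ B k i = 0 := by
  by_contra! h
  have hG : G.Adj i k := (hA.2 i k hki.symm).mp h.1
  have hGc : Gᶜ.Adj k i := (hB.2 k i hki).mp h.2
  exact (SimpleGraph.compl_adj G k i).mp hGc |>.2 hG.symm

theorem stmt_1 {n : ℕ} (G : SimpleGraph (Fin n)) (A B : Matrix (Fin n) (Fin n) ℝ)
    (hA : MatIn G A) (hB : MatIn Gᶜ B) (hAB : A * B = 0) (i : Fin n) :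
    A i i = 0 ∨ B i i = 0 := by
  have hdiag : (A * B) i i = A i i * B i i :=
    Matrix.mul_apply_diag_of_forall_ne fun _ hki => hA.apply_eq_zero_or_compl_apply_eq_zero hB hki
  rw [hAB, Matrix.zero_apply] at hdiag
  exact mul_eq_zero.mp hdiag.symm
end

section
/- Let G be a graph, A ∈ S(G), B ∈ S(complement of G) with AB = O, and let i ≠ j be vertices with N_G(i) ⊆ N_G[j]. If i is adjacent to j in G, then b_jj = 0; if i is not adjacent to j in G, then a_ii = 0. -/
namespace MatIn

variable {V : Type*} [Fintype V] {G : SimpleGraph V} {A B : Matrix V V ℝ} {i j : V}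

theorem apply_ne_zero_of_adj (hA : MatIn G A) (h : G.Adj i j) : A i j ≠ 0 :=
  (hA.2 i j h.ne).2 h

theorem apply_eq_zero_of_not_adj (hA : MatIn G A) (hij : i ≠ j) (h : ¬G.Adj i j) :
    A i j = 0 :=
  not_not.1 (mt (hA.2 i j hij).1 h)

theorem compl_apply_eq_zero_of_adj (hB : MatIn Gᶜ B) (h : G.Adj i j) : B i j = 0 :=
  hB.apply_eq_zero_of_not_adj h.ne fun h' => h'.2 h

theorem compl_apply_ne_zero_of_not_adj (hB : MatIn Gᶜ B) (hij : i ≠ j) (h : ¬G.Adj i j) :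
    B i j ≠ 0 :=
  hB.apply_ne_zero_of_adj ⟨hij, h⟩

/-- Every other term `A i k * B k j` of the product vanishes: `A i k ≠ 0` puts `k` in
`N(i) ⊆ N[j]`, hence next to `j`, where `B` vanishes. -/
theorem mul_apply_eq_of_neighborSet_subset [DecidableEq V] (hA : MatIn G A) (hB : MatIn Gᶜ B)
    (hij : i ≠ j) (hsub : G.neighborSet i ⊆ insert j (G.neighborSet j)) :
    (A * B) i j = A i i * B i j + A i j * B j j := by
  rw [Matrix.mul_apply]
  refine Finset.sum_eq_add i j hij (fun k _ ⟨hki, hkj⟩ => ?_) (by simp) (by simp)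
  by_cases hik : G.Adj i k
  · have hjk : G.Adj j k := (hsub hik).resolve_left hkj
    rw [hB.compl_apply_eq_zero_of_adj hjk.symm, mul_zero]
  · rw [hA.apply_eq_zero_of_not_adj (Ne.symm hki) hik, zero_mul]

end MatIn

theorem stmt_2 {n : ℕ} (G : SimpleGraph (Fin n)) (A B : Matrix (Fin n) (Fin n) ℝ)
    (hA : MatIn G A) (hB : MatIn Gᶜ B) (hAB : A * B = 0) (i j : Fin n) (hij : i ≠ j)
    (hsub : G.neighborSet i ⊆ insert j (G.neighborSet j)) :
    (G.Adj i j → B j j = 0) ∧ (¬G.Adj i j → A i i = 0) := by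
  have hentry : A i i * B i j + A i j * B j j = 0 := by
    rw [← hA.mul_apply_eq_of_neighborSet_subset hB hij hsub, hAB, Matrix.zero_apply]
  constructor
  · intro hadj
    rw [hB.compl_apply_eq_zero_of_adj hadj, mul_zero, zero_add] at hentry
    exact (mul_eq_zero.1 hentry).resolve_left (hA.apply_ne_zero_of_adj hadj)
  · intro hnadj
    rw [hA.apply_eq_zero_of_not_adj hij hnadj, zero_mul, add_zero] at hentry
    exact (mul_eq_zero.1 hentry).resolve_right (hB.compl_apply_ne_zero_of_not_adj hij hnadj)
end

section
/- Let G be a graph containing three distinct vertices u, v, w with v, w not in N(u), |N(u) \ N(w)| = 1, and N(u) ⊆ N(v). Then G is not complementary vanishing, i.e., there do not exist A ∈ S(G) and B ∈ S(complement of G) with AB = 0. -/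
theorem stmt_4 {n : ℕ} (G : SimpleGraph (Fin n)) (u v w : Fin n)
    (huv : u ≠ v) (huw : u ≠ w) (hvw : v ≠ w)
    (hv : v ∉ G.neighborSet u) (hw : w ∉ G.neighborSet u)
    (h1 : (G.neighborSet u \ G.neighborSet w).ncard = 1)
    (h0 : G.neighborSet u ⊆ G.neighborSet v) :
    ¬ CompVan G := by
  rintro ⟨A, B, ⟨hAs, hA⟩, ⟨hBs, hB⟩, hAB⟩
  obtain ⟨x, hx⟩ := Set.ncard_eq_one.mp h1
  have hxmem : x ∈ G.neighborSet u \ G.neighborSet w := by rw [hx]; exact rfl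
  have hxu : G.Adj u x := hxmem.1
  have hxw : ¬ G.Adj w x := hxmem.2
  have hxnu : x ≠ u := fun h => G.loopless.irrefl u (h ▸ hxu)
  have hxnw : x ≠ w := fun h => hw (h ▸ hxmem.1)
  -- Step 1: A u u = 0
  have hBuv : B u v ≠ 0 := (hB u v huv).mpr ⟨huv, hv⟩
  have hAuu : A u u = 0 := by
    have hABuv : (A * B) u v = 0 := by rw [hAB]; rfl
    rw [Matrix.mul_apply] at hABuv
    have hsum : ∑ k, A u k * B k v = A u u * B u v := by
      apply Finset.sum_eq_single u
      · intro k _ hk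
        by_cases hkv : k = v
        · subst hkv
          have : A u k = 0 := by
            by_contra h
            exact hv ((hA u k huv).mp h)
          rw [this, zero_mul]
        · by_cases hAuk : A u k = 0
          · rw [hAuk, zero_mul]
          · have hadj : G.Adj u k := (hA u k (Ne.symm hk)).mp hAuk
            have hvk : G.Adj v k := h0 hadj
            have : B k v = 0 := by
              by_contra h
              exact ((hB k v hkv).mp h).2 hvk.symm
            rw [this, mul_zero]
      · intro h; exact absurd (Finset.mem_univ u) h
    rw [hsum] at hABuv
    exact (mul_eq_zero.mp hABuv).resolve_right hBuv
  -- Step 2: contradiction from (A*B) u w = 0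
  have hABuw : (A * B) u w = 0 := by rw [hAB]; rfl
  rw [Matrix.mul_apply] at hABuw
  have hsum : ∑ k, A u k * B k w = A u x * B x w := by
    apply Finset.sum_eq_single x
    · intro k _ hk
      by_cases hku : k = u
      · subst hku; rw [hAuu, zero_mul]
      · by_cases hAuk : A u k = 0
        · rw [hAuk, zero_mul]
        · have hadj : G.Adj u k := (hA u k (Ne.symm hku)).mp hAuk
          have hknw : k ≠ w := fun h => hw (h ▸ hadj)
          by_cases hBkw : B k w = 0
          · rw [hBkw, mul_zero]
          · exfalso
            have hck : ¬ G.Adj k w := ((hB k w hknw).mp hBkw).2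
            have : k ∈ G.neighborSet u \ G.neighborSet w :=
              ⟨hadj, fun h => hck h.symm⟩
            rw [hx] at this
            exact hk this
    · intro h; exact absurd (Finset.mem_univ x) h
  rw [hsum] at hABuw
  have hAux : A u x ≠ 0 := (hA u x (Ne.symm hxnu)).mpr hxu
  have hBxw : B x w ≠ 0 := (hB x w hxnw).mpr ⟨hxnw, fun h => hxw h.symm⟩
  exact (mul_ne_zero hAux hBxw) hABuw
end

section
/- A tree T is complementary vanishing if and only if T is a star (possibly a single vertex). -/
attribute [local instance] Classical.propDecidable

lemma ncard_neighborSet_eq_degree {n : ℕ} (G : SimpleGraph (Fin n)) (v : Fin n) :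
    (G.neighborSet v).ncard = G.degree v := by
  rw [Set.ncard_eq_toFinset_card', SimpleGraph.degree, SimpleGraph.neighborFinset_def]

lemma degree_pos_of_connected {n : ℕ} (G : SimpleGraph (Fin n)) (hc : G.Connected)
    (h2 : 2 ≤ n) (x : Fin n) : 0 < G.degree x := by
  rw [SimpleGraph.degree_pos_iff_exists_adj]
  have : Nontrivial (Fin n) := Fin.nontrivial_iff_two_le.mpr h2
  obtain ⟨y, hy⟩ := exists_ne x
  obtain ⟨W⟩ := hc x y
  cases W with
  | nil => exact absurd rfl hy.symm
  | cons h _ => exact ⟨_, h⟩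

lemma exists_leaf {n : ℕ} (T : SimpleGraph (Fin n)) (hT : T.IsTree) (h2 : 2 ≤ n) :
    ∃ u, T.degree u = 1 := by
  classical
  by_contra hno
  push_neg at hno
  have hge : ∀ x, 2 ≤ T.degree x := by
    intro x
    have := degree_pos_of_connected T hT.isConnected h2 x
    have := hno x
    omega
  have hsum : ∑ v, T.degree v = 2 * T.edgeFinset.card :=
    SimpleGraph.sum_degrees_eq_twice_card_edges T
  have hcard : T.edgeFinset.card + 1 = n := by
    simpa using hT.card_edgeFinset
  have hlow : (Finset.univ : Finset (Fin n)).card * 2 ≤ ∑ v, T.degree v :=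
    Finset.card_nsmul_le_sum _ _ _ (fun x _ => hge x)
  simp only [Finset.card_univ, Fintype.card_fin] at hlow
  omega

lemma compVan_of_star {n : ℕ} (G : SimpleGraph (Fin n)) (c : Fin n)
    (hstar : ∀ v w, G.Adj v w ↔ v ≠ w ∧ (v = c ∨ w = c)) : CompVan G := by
  classical
  set A : Matrix (Fin n) (Fin n) ℝ :=
    Matrix.of fun v w => if v = w then 0 else if v = c ∨ w = c then 1 else 0 with hA
  set B : Matrix (Fin n) (Fin n) ℝ :=
    Matrix.of fun v w => if v = c ∨ w = c then 0 else if v = w then -((n : ℝ) - 2) else 1 with hB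
  have hAapp : ∀ v w, A v w = if v = w then 0 else if v = c ∨ w = c then 1 else 0 :=
    fun v w => rfl
  have hBapp : ∀ v w, B v w = if v = c ∨ w = c then 0 else if v = w then -((n : ℝ) - 2) else 1 :=
    fun v w => rfl
  have hBc : ∀ w, B c w = 0 := by intro w; rw [hBapp]; simp
  have hcolsum : ∀ w, ∑ k, B k w = 0 := by
    intro w
    by_cases hw : w = c
    · subst hw
      apply Finset.sum_eq_zero
      intro k _
      rw [hBapp]; simp
    · have hpt : ∀ k, B k w =
          1 + ((if k = c then (-1 : ℝ) else 0) + (if k = w then -((n : ℝ) - 1) else 0)) := by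
        intro k
        rw [hBapp]
        by_cases hkc : k = c
        · rw [if_pos (Or.inl hkc), if_pos hkc, if_neg (fun h : k = w => hw (h.symm.trans hkc))]
          norm_num
        · by_cases hkw : k = w
          · rw [if_neg (not_or.mpr ⟨hkc, hw⟩), if_pos hkw, if_neg hkc, if_pos hkw]
            ring
          · rw [if_neg (not_or.mpr ⟨hkc, hw⟩), if_neg hkw, if_neg hkc, if_neg hkw]
            norm_num
      calc ∑ k, B k w
          = ∑ k : Fin n, (1 + ((if k = c then (-1 : ℝ) else 0)
              + (if k = w then -((n : ℝ) - 1) else 0))) :=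
            Finset.sum_congr rfl fun k _ => hpt k
        _ = 0 := by
            have h1 : ∑ k : Fin n, (if k = c then (-1 : ℝ) else 0) = -1 := by simp
            have h2 : ∑ k : Fin n, (if k = w then -((n : ℝ) - 1) else 0) = -((n : ℝ) - 1) := by
              simp
            have h3 : ∑ _k : Fin n, (1 : ℝ) = n := by simp
            rw [Finset.sum_add_distrib, Finset.sum_add_distrib, h1, h2, h3]
            ring
  refine ⟨A, B, ⟨?_, ?_⟩, ⟨?_, ?_⟩, ?_⟩
  · apply Matrix.IsSymm.ext
    intro i j
    rw [hAapp, hAapp]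
    by_cases h : i = j
    · subst h; simp
    · simp only [h, Ne.symm h, if_false]
      by_cases h2 : i = c <;> by_cases h3 : j = c <;> simp [h2, h3]
  · intro i j hij
    rw [hAapp]
    simp only [hij, if_false]
    rw [hstar]
    by_cases h2 : i = c ∨ j = c <;> simp [h2, hij]
  · apply Matrix.IsSymm.ext
    intro i j
    rw [hBapp, hBapp]
    by_cases h : i = j
    · subst h; simp
    · by_cases h2 : i = c <;> by_cases h3 : j = c <;>
        simp [h2, h3, h, Ne.symm h]
  · intro i j hij
    rw [hBapp]
    simp only [hij, if_false]
    rw [SimpleGraph.compl_adj, hstar]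
    by_cases h2 : i = c ∨ j = c <;> simp [h2, hij]
  · ext v w
    rw [Matrix.mul_apply, Matrix.zero_apply]
    by_cases hv : v = c
    · have hterm : ∀ k, A v k * B k w = B k w := by
        intro k
        by_cases hk : k = c
        · rw [hk, hBc]; ring
        · rw [hAapp]
          have hvk : v ≠ k := by rintro rfl; exact hk hv
          simp [hvk, hv, Ne.symm hk]
      calc ∑ k, A v k * B k w = ∑ k, B k w := Finset.sum_congr rfl fun k _ => hterm k
        _ = 0 := hcolsum w
    · apply Finset.sum_eq_zero
      intro k _
      by_cases hk : k = c
      · subst hk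
        rw [hBc]; ring
      · rw [hAapp]
        by_cases hvk : v = k
        · simp [hvk]
        · simp [hvk, hv, hk]

theorem stmt_5 {n : ℕ} (T : SimpleGraph (Fin n)) (hT : T.IsTree) :
    CompVan T ↔ ∀ v w : Fin n,
      1 < (T.neighborSet v).ncard → 1 < (T.neighborSet w).ncard → v = w := by
  classical
  constructor
  · rintro ⟨A, B, ⟨hAsymm, hApat⟩, ⟨hBsymm, hBpat⟩, hAB⟩ v w hv hw
    rw [ncard_neighborSet_eq_degree] at hv hw
    by_contra hvw
    have h2 : 2 ≤ n := by
      have : Nontrivial (Fin n) := ⟨v, w, hvw⟩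
      have := Fintype.one_lt_card_iff_nontrivial.mpr this
      simp at this; omega
    obtain ⟨u, hu⟩ := exists_leaf T hT h2
    obtain ⟨p, hp⟩ := Finset.card_eq_one.mp hu
    have hup : T.Adj u p := by
      rw [← SimpleGraph.mem_neighborFinset, hp]; simp
    have hune : u ≠ p := hup.ne
    have hnadj : ∀ k, k ≠ p → ¬ T.Adj u k := by
      intro k hk hadj
      have : k ∈ T.neighborFinset u := (SimpleGraph.mem_neighborFinset _ _ _).mpr hadj
      rw [hp] at this
      exact hk (Finset.mem_singleton.mp this)
    have hA0 : ∀ k, k ≠ u → k ≠ p → A u k = 0 := by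
      intro k hku hkp
      by_contra h
      exact hnadj k hkp ((hApat u k (Ne.symm hku)).mp h)
    have key : ∀ j, A u u * B u j + A u p * B p j = 0 := by
      intro j
      have h0 : (A * B) u j = 0 := by rw [hAB]; rfl
      rw [Matrix.mul_apply] at h0
      have hsub : ({u, p} : Finset (Fin n)) ⊆ Finset.univ := Finset.subset_univ _
      have heq : ∑ k ∈ ({u, p} : Finset (Fin n)), A u k * B k j
          = ∑ k, A u k * B k j := by
        apply Finset.sum_subset hsub
        intro k _ hk
        have hku : k ≠ u := fun h => hk (by simp [h])
        have hkp : k ≠ p := fun h => hk (by simp [h])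
        rw [hA0 k hku hkp, zero_mul]
      rw [← heq, Finset.sum_pair hune] at h0
      exact h0
    have hBup : B u p = 0 := by
      by_contra h
      have := (hBpat u p hune).mp h
      rw [SimpleGraph.compl_adj] at this
      exact this.2 hup
    have hAup : A u p ≠ 0 := (hApat u p hune).mpr hup
    have hBpp : B p p = 0 := by
      have := key p
      rw [hBup, mul_zero, zero_add] at this
      exact (mul_eq_zero.mp this).resolve_left hAup
    have hBuu0 : A u u * B u u = 0 := by
      have := key u
      rw [hBsymm.apply u p] at this
      rw [hBup, mul_zero, add_zero] at this
      exact this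
    have hBuj : ∀ j, j ≠ u → j ≠ p → B u j ≠ 0 := by
      intro j hju hjp
      rw [hBpat u j (Ne.symm hju), SimpleGraph.compl_adj]
      exact ⟨Ne.symm hju, hnadj j hjp⟩
    by_cases hAuu : A u u = 0
    · -- p is adjacent to everything else; contradiction by degree count
      have hadjall : ∀ j, j ≠ p → T.Adj p j := by
        intro j hjp
        by_cases hju : j = u
        · subst hju; exact hup.symm
        · have hk := key j
          rw [hAuu, zero_mul, zero_add] at hk
          have hBpj : B p j = 0 := (mul_eq_zero.mp hk).resolve_left hAup
          by_contra hnot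
          have : Tᶜ.Adj p j := ⟨Ne.symm hjp, hnot⟩
          exact ((hBpat p j (Ne.symm hjp)).mpr this) hBpj
      have hdegp : T.degree p = n - 1 := by
        have : T.neighborFinset p = Finset.univ.erase p := by
          ext k
          simp only [SimpleGraph.mem_neighborFinset, Finset.mem_erase, Finset.mem_univ,
            and_true]
          constructor
          · intro h; exact h.ne'
          · intro h; exact hadjall k h
        rw [SimpleGraph.degree, this, Finset.card_erase_of_mem (Finset.mem_univ p)]
        simp
      -- pick x ∈ {v, w} with x ≠ p
      obtain ⟨x, hxp, hx⟩ : ∃ x, x ≠ p ∧ 1 < T.degree x := by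
        by_cases hvp : v = p
        · exact ⟨w, fun h => hvw (hvp.trans h.symm), hw⟩
        · exact ⟨v, hvp, hv⟩
      have hsum : ∑ k, T.degree k = 2 * T.edgeFinset.card :=
        SimpleGraph.sum_degrees_eq_twice_card_edges T
      have hcard : T.edgeFinset.card + 1 = n := by simpa using hT.card_edgeFinset
      have hsplit : ∑ k ∈ (Finset.univ \ {p, x}), T.degree k + ∑ k ∈ ({p, x} : Finset (Fin n)), T.degree k
          = ∑ k, T.degree k := Finset.sum_sdiff (Finset.subset_univ _)
      have hpx : ∑ k ∈ ({p, x} : Finset (Fin n)), T.degree k = T.degree p + T.degree x :=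
        Finset.sum_pair (Ne.symm hxp)
      have hlow : (Finset.univ \ {p, x}).card * 1 ≤ ∑ k ∈ (Finset.univ \ {p, x}), T.degree k :=
        by simpa using Finset.card_nsmul_le_sum (Finset.univ \ {p, x}) (fun k => T.degree k) 1
            (fun k _ => degree_pos_of_connected T hT.isConnected h2 k)
      have hcard2 : (Finset.univ \ {p, x}).card = n - 2 := by
        rw [Finset.card_sdiff_of_subset (Finset.subset_univ _), Finset.card_pair (Ne.symm hxp)]
        simp
      omega
    · -- u and p form an isolated edge; contradiction with connectivity
      have hBuu : B u u = 0 := (mul_eq_zero.mp hBuu0).resolve_left hAuu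
      have hpadj : ∀ j, T.Adj p j → j = u := by
        intro j hadj
        by_contra hju
        have hjp : j ≠ p := hadj.ne'
        have hBujne := hBuj j hju hjp
        have hk := key j
        have hBpj : B p j ≠ 0 := by
          intro h0
          rw [h0, mul_zero, add_zero, mul_eq_zero] at hk
          rcases hk with h | h
          · exact hAuu h
          · exact hBujne h
        have := (hBpat p j (Ne.symm hjp)).mp hBpj
        exact this.2 hadj
      have claim : ∀ (x y : Fin n) (W : T.Walk x y), y = u → x = u ∨ x = p := by
        intro x y W
        induction W with
        | nil => exact fun h => Or.inl h
        | @cons a b d h W ih =>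
          intro hd
          rcases ih hd with hbu | hbp
          · right
            by_contra hap
            exact hnadj a hap (hbu ▸ h).symm
          · left
            exact hpadj a (hbp ▸ h).symm
      obtain ⟨W⟩ := hT.isConnected v u
      rcases claim v u W rfl with h | h
      · subst h; omega
      · subst h
        have : T.degree v ≤ 1 := by
          have hsub : T.neighborFinset v ⊆ {u} := by
            intro k hk
            rw [SimpleGraph.mem_neighborFinset] at hk
            simp [hpadj k hk]
          calc T.degree v = (T.neighborFinset v).card := rfl
            _ ≤ ({u} : Finset (Fin n)).card := Finset.card_le_card hsub
            _ = 1 := Finset.card_singleton u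
        omega
  · intro H
    simp only [ncard_neighborSet_eq_degree] at H
    have hne : Nonempty (Fin n) := hT.isConnected.nonempty
    -- choose the center
    obtain ⟨c, hdeg⟩ : ∃ c, ∀ y, y ≠ c → T.degree y ≤ 1 := by
      by_cases hex : ∃ x, 1 < T.degree x
      · obtain ⟨x, hx⟩ := hex
        refine ⟨x, fun y hy => ?_⟩
        by_contra h
        exact hy (H y x (by omega) hx)
      · push_neg at hex
        exact ⟨Classical.arbitrary _, fun y _ => hex y⟩
    have hc : ∀ (x y : Fin n) (W : T.Walk x y), y = c → x = c ∨ T.Adj x c := by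
      intro x y W
      induction W with
      | nil => exact fun h => Or.inl h
      | @cons a b d h W ih =>
        intro hd
        rcases ih hd with hbc | hbc
        · exact Or.inr (hbc ▸ h)
        · by_cases hac : a = c
          · exact Or.inl hac
          · exfalso
            have hbne : b ≠ c := hbc.ne
            have : 1 < T.degree b := by
              rw [SimpleGraph.degree, Finset.one_lt_card]
              exact ⟨a, (SimpleGraph.mem_neighborFinset _ _ _).mpr h.symm,
                c, (SimpleGraph.mem_neighborFinset _ _ _).mpr hbc, hac⟩
            have := hdeg b hbne
            omega
    have hadjc : ∀ x, x ≠ c → T.Adj x c := by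
      intro x hx
      obtain ⟨W⟩ := hT.isConnected x c
      exact (hc x c W rfl).resolve_left hx
    apply compVan_of_star T c
    intro v w
    constructor
    · intro h
      refine ⟨h.ne, ?_⟩
      by_contra hcon
      push_neg at hcon
      obtain ⟨hvc, hwc⟩ := hcon
      have : 1 < T.degree v := by
        rw [SimpleGraph.degree, Finset.one_lt_card]
        exact ⟨w, (SimpleGraph.mem_neighborFinset _ _ _).mpr h,
          c, (SimpleGraph.mem_neighborFinset _ _ _).mpr (hadjc v hvc), hwc⟩
      have := hdeg v hvc
      omega
    · rintro ⟨hvw, hc' | hc'⟩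
      · subst hc'
        exact (hadjc w (Ne.symm hvw)).symm
      · subst hc'
        exact hadjc v hvw
end

section
/- If T is a star graph (a tree in which all edges share a common vertex), A is the adjacency matrix of T, and B is the Laplacian matrix of the complement of T, then AB = 0. In particular, every star is complementary vanishing when the star has at least 2 vertices. -/
theorem stmt_6 {n : ℕ} (T : SimpleGraph (Fin n)) [DecidableRel T.Adj]
    (hT : T.IsTree) (c : Fin n) (hstar : ∀ v w : Fin n, T.Adj v w → v = c ∨ w = c)
    (hn : 2 ≤ n) :
    T.adjMatrix ℝ * Tᶜ.lapMatrix ℝ = 0 ∧ CompVan T := by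
  classical
  have hadjc : ∀ v : Fin n, v ≠ c → T.Adj v c := by
    intro v hv
    obtain ⟨p⟩ := hT.isConnected.preconnected v c
    cases p with
    | nil => exact absurd rfl hv
    | cons h q =>
      rcases hstar _ _ h with h1 | h2
      · exact absurd h1 hv
      · subst h2; exact h
  have hTadj : ∀ i j : Fin n, T.Adj i j ↔ i ≠ j ∧ (i = c ∨ j = c) := by
    intro i j
    constructor
    · intro h; exact ⟨h.ne, hstar _ _ h⟩
    · rintro ⟨hij, h | h⟩
      · subst h; exact (hadjc j (Ne.symm hij)).symm
      · subst h; exact hadjc i hij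
  have hcadj : ∀ j, ¬ Tᶜ.Adj c j := by
    intro j
    rw [SimpleGraph.compl_adj]
    rintro ⟨hne, hna⟩
    exact hna ((hadjc j (Ne.symm hne)).symm)
  have hLc : ∀ j, Tᶜ.lapMatrix ℝ c j = 0 := by
    intro j
    have h2 : Tᶜ.degree c = 0 := by
      rw [SimpleGraph.degree, Finset.card_eq_zero, Finset.eq_empty_iff_forall_notMem]
      intro w hw
      exact hcadj w ((SimpleGraph.mem_neighborFinset _ _ _).1 hw)
    by_cases hcj : c = j
    · simp [SimpleGraph.lapMatrix, SimpleGraph.degMatrix, Matrix.diagonal_apply, hcadj j,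
        hcj ▸ h2, hcj]
    · simp [SimpleGraph.lapMatrix, SimpleGraph.degMatrix, Matrix.diagonal_apply, hcadj j, hcj]
  have hrow : ∀ i, ∑ j, Tᶜ.lapMatrix ℝ i j = 0 := by
    intro i
    have h := congrFun (Tᶜ.lapMatrix_mulVec_const_eq_zero (R := ℝ)) i
    simpa [Matrix.mulVec, dotProduct] using h
  have hcol : ∀ j, ∑ k, Tᶜ.lapMatrix ℝ k j = 0 := by
    intro j
    calc ∑ k, Tᶜ.lapMatrix ℝ k j = ∑ k, Tᶜ.lapMatrix ℝ j k := by
          refine Finset.sum_congr rfl fun k _ => ?_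
          exact (Tᶜ.isSymm_lapMatrix (R := ℝ)).apply j k
      _ = 0 := hrow j
  have key : T.adjMatrix ℝ * Tᶜ.lapMatrix ℝ = 0 := by
    ext i j
    rw [Matrix.mul_apply, Matrix.zero_apply]
    by_cases hi : i = c
    · rw [hi]
      have hA : ∀ k : Fin n, T.adjMatrix ℝ c k = if k = c then 0 else 1 := by
        intro k
        by_cases hk : k = c
        · rw [hk]; simp
        · simp [SimpleGraph.adjMatrix_apply, (hTadj c k).2 ⟨Ne.symm hk, Or.inl rfl⟩, hk]
      calc ∑ k, T.adjMatrix ℝ c k * Tᶜ.lapMatrix ℝ k j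
          = ∑ k, (Tᶜ.lapMatrix ℝ k j - if k = c then Tᶜ.lapMatrix ℝ k j else 0) := by
            refine Finset.sum_congr rfl fun k _ => ?_
            rw [hA k]
            by_cases hk : k = c <;> simp [hk]
        _ = (∑ k, Tᶜ.lapMatrix ℝ k j) - Tᶜ.lapMatrix ℝ c j := by
            rw [Finset.sum_sub_distrib, Finset.sum_ite_eq' Finset.univ c]
            simp
        _ = 0 := by rw [hcol j, hLc j, sub_zero]
    · have hA : ∀ k : Fin n, T.adjMatrix ℝ i k = if k = c then 1 else 0 := by
        intro k
        by_cases hk : k = c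
        · rw [hk]; simp [SimpleGraph.adjMatrix_apply, (hTadj i c).2 ⟨hi, Or.inr rfl⟩]
        · have : ¬ T.Adj i k := by
            rw [hTadj]
            rintro ⟨-, h | h⟩ <;> [exact hi h; exact hk h]
          simp [SimpleGraph.adjMatrix_apply, this, hk]
      calc ∑ k, T.adjMatrix ℝ i k * Tᶜ.lapMatrix ℝ k j
          = ∑ k, (if k = c then Tᶜ.lapMatrix ℝ k j else 0) := by
            refine Finset.sum_congr rfl fun k _ => ?_
            rw [hA k]
            by_cases hk : k = c <;> simp [hk]
        _ = Tᶜ.lapMatrix ℝ c j := by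
            rw [Finset.sum_ite_eq' Finset.univ c]; simp
        _ = 0 := hLc j
  refine ⟨key, T.adjMatrix ℝ, Tᶜ.lapMatrix ℝ, ?_, ?_, key⟩
  · refine ⟨T.isSymm_adjMatrix, fun i j hij => ?_⟩
    by_cases h : T.Adj i j <;> simp [h]
  · refine ⟨Tᶜ.isSymm_lapMatrix (R := ℝ), fun i j hij => ?_⟩
    have : Tᶜ.lapMatrix ℝ i j = if Tᶜ.Adj i j then (-1 : ℝ) else 0 := by
      by_cases h : Tᶜ.Adj i j <;> simp [SimpleGraph.lapMatrix, SimpleGraph.degMatrix, hij, h]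
    rw [this]
    by_cases h : Tᶜ.Adj i j <;> simp [h]
end

section
/- Let G be a graph with an induced odd cycle C on vertices 1,...,2k+1 and a vertex v not adjacent to any vertex of C, such that every vertex outside C that is adjacent to some vertex of C is adjacent to v. If A ∈ S(G) and B ∈ S(complement of G) satisfy AB = 0, then a_ii ≠ 0 for some i ∈ {1,...,2k+1}. -/
theorem stmt_7 {n k : ℕ} (G : SimpleGraph (Fin n)) (c : Fin (2 * k + 1) → Fin n)
    (hc : Function.Injective c)
    (hcyc : ∀ i j : Fin (2 * k + 1), G.Adj (c i) (c j) ↔ (j = i + 1 ∨ i = j + 1))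
    (v : Fin n) (hv : ∀ i, ¬ G.Adj v (c i))
    (hext : ∀ w, w ∉ Set.range c → (∃ i, G.Adj w (c i)) → G.Adj v w)
    (A B : Matrix (Fin n) (Fin n) ℝ)
    (hA : MatIn G A) (hB : MatIn Gᶜ B) (hAB : A * B = 0) :
    ∃ i : Fin (2 * k + 1), A (c i) (c i) ≠ 0 := by
  by_contra hcon
  push_neg at hcon
  -- rule out k = 0 (a "1-cycle" would be a loop)
  rcases Nat.eq_zero_or_pos k with hk | hk
  · subst hk
    exact absurd ((hcyc 0 0).mpr (Or.inl (by decide))) (G.loopless.irrefl _)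
  -- basic facts about Fin (2k+1)
  have hone : (1 : Fin (2 * k + 1)) ≠ 0 := by
    intro h
    have h1 : ((1 : Fin (2 * k + 1)) : ℕ) = 1 := by
      rw [Fin.val_one']; exact Nat.mod_eq_of_lt (by omega)
    rw [h] at h1
    simp at h1
  have htwo : (1 : Fin (2 * k + 1)) + 1 ≠ 0 := by
    intro h
    have v1 : ((1 : Fin (2 * k + 1)) : ℕ) = 1 := by
      rw [Fin.val_one']; exact Nat.mod_eq_of_lt (by omega)
    have h1 : (((1 : Fin (2 * k + 1)) + 1 : Fin (2 * k + 1)) : ℕ) = 2 := by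
      rw [Fin.val_add, v1]; exact Nat.mod_eq_of_lt (by omega)
    rw [h] at h1
    simp at h1
  have hstep : ∀ i : Fin (2 * k + 1), i + 1 ≠ i := by
    intro i h
    exact hone (add_left_cancel (a := i) (by rw [add_zero]; exact h))
  have hstep2 : ∀ i : Fin (2 * k + 1), i + 1 ≠ i - 1 := by
    intro i h
    refine htwo (add_left_cancel (a := i) ?_)
    rw [add_zero, ← add_assoc, h]
    exact sub_add_cancel i 1
  -- v is not one of the cycle vertices
  have hvr : ∀ i, v ≠ c i := by
    intro i h
    exact hv (i + 1) (h ▸ (hcyc i (i + 1)).mpr (Or.inl rfl))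
  set a : Fin (2 * k + 1) → ℝ := fun i => A (c i) (c (i + 1)) with ha
  set x : Fin (2 * k + 1) → ℝ := fun i => B (c i) v with hx
  have hane : ∀ i, a i ≠ 0 := by
    intro i
    exact (hA.2 _ _ (fun h => hstep i (hc h).symm)).mpr ((hcyc i (i + 1)).mpr (Or.inl rfl))
  have hxne : ∀ i, x i ≠ 0 := by
    intro i
    refine (hB.2 _ _ (fun h => hvr i h.symm)).mpr ?_
    rw [SimpleGraph.compl_adj]
    exact ⟨fun h => hvr i h.symm, fun h => hv i h.symm⟩
  -- the key equations from (A*B) (c i) v = 0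
  have E : ∀ i : Fin (2 * k + 1), a i * x (i + 1) = -(a (i - 1) * x (i - 1)) := by
    intro i
    have h0 : (A * B) (c i) v = 0 := by rw [hAB]; rfl
    rw [Matrix.mul_apply] at h0
    have hsum : ∑ w, A (c i) w * B w v
        = A (c i) (c (i + 1)) * B (c (i + 1)) v + A (c i) (c (i - 1)) * B (c (i - 1)) v := by
      apply Fintype.sum_eq_add _ _ (fun h => hstep2 i (hc h))
      rintro w ⟨hw1, hw2⟩
      by_cases hwc : w = c i
      · subst hwc; rw [hcon i, zero_mul]
      by_cases hwv : w = v
      · subst hwv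
        have : A (c i) w = 0 := by
          by_contra h
          exact hv i (((hA.2 _ _ (Ne.symm hwc)).mp h).symm)
        rw [this, zero_mul]
      by_cases hadj : G.Adj (c i) w
      · -- w is an external neighbor of the cycle, hence adjacent to v, so B w v = 0
        have hwnr : w ∉ Set.range c := by
          rintro ⟨j, rfl⟩
          rcases (hcyc i j).mp hadj with h | h
          · exact hw1 (congrArg c h)
          · have hj : i - 1 = j := by rw [h]; exact add_sub_cancel_right j 1
            exact hw2 (congrArg c hj).symm
        have havw : G.Adj v w := hext w hwnr ⟨i, hadj.symm⟩
        have : B w v = 0 := by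
          by_contra h
          exact ((hB.2 _ _ hwv).mp h).2 havw.symm
        rw [this, mul_zero]
      · have : A (c i) w = 0 := by
          by_contra h
          exact hadj ((hA.2 _ _ (Ne.symm hwc)).mp h)
        rw [this, zero_mul]
    rw [hsum] at h0
    have e1 : a i = A (c i) (c (i + 1)) := rfl
    have e2 : x (i + 1) = B (c (i + 1)) v := rfl
    have e4 : x (i - 1) = B (c (i - 1)) v := rfl
    have e3 : a (i - 1) = A (c i) (c (i - 1)) := by
      have hi : i - 1 + 1 = i := by exact sub_add_cancel i 1
      show A (c (i - 1)) (c (i - 1 + 1)) = A (c i) (c (i - 1))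
      rw [hi]
      exact hA.1.apply (c i) (c (i - 1))
    rw [e1, e2, e4, e3]
    linarith [h0]
  -- multiply all equations together
  have hprod : ∏ i : Fin (2 * k + 1), (a i * x (i + 1))
      = ∏ i : Fin (2 * k + 1), -(a (i - 1) * x (i - 1)) :=
    Finset.prod_congr rfl fun i _ => E i
  have hL : ∏ i : Fin (2 * k + 1), (a i * x (i + 1))
      = (∏ i, a i) * (∏ i, x i) := by
    rw [Finset.prod_mul_distrib]
    congr 1
    exact Fintype.prod_equiv (Equiv.addRight 1) _ _ (fun i => rfl)
  have hR : ∏ i : Fin (2 * k + 1), -(a (i - 1) * x (i - 1))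
      = -((∏ i, a i) * (∏ i, x i)) := by
    have hneg : ∀ i : Fin (2 * k + 1), -(a (i - 1) * x (i - 1))
        = (-1 : ℝ) * (a (i - 1) * x (i - 1)) := fun i => by ring
    simp_rw [hneg]
    rw [Finset.prod_mul_distrib, Finset.prod_const, Finset.card_univ, Fintype.card_fin,
      Odd.neg_one_pow ⟨k, by ring⟩, Finset.prod_mul_distrib]
    have r1 : ∏ i : Fin (2 * k + 1), a (i - 1) = ∏ i, a i :=
      Fintype.prod_equiv (Equiv.subRight 1) _ _ (fun i => rfl)
    have r2 : ∏ i : Fin (2 * k + 1), x (i - 1) = ∏ i, x i :=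
      Fintype.prod_equiv (Equiv.subRight 1) _ _ (fun i => rfl)
    rw [r1, r2]
    ring
  rw [hL, hR] at hprod
  have hPa : (∏ i, a i) ≠ 0 := Finset.prod_ne_zero_iff.mpr fun i _ => hane i
  have hPx : (∏ i, x i) ≠ 0 := Finset.prod_ne_zero_iff.mpr fun i _ => hxne i
  have : (∏ i, a i) * (∏ i, x i) = 0 := by linarith
  exact (mul_ne_zero hPa hPx) this
end

section
/- If G is a graph in which every vertex has at least one twin (a distinct vertex u with N(u) \ {v} = N(v) \ {u}), then G is complementary vanishing. -/
namespace CVaux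

variable {n : ℕ} (G : SimpleGraph (Fin n))

/-- Twin relation (allowing `x = y`). -/
def Twin (x y : Fin n) : Prop := G.neighborSet x \ {y} = G.neighborSet y \ {x}

variable {G}

lemma twin_refl (x : Fin n) : Twin G x x := rfl

lemma twin_symm {x y : Fin n} (h : Twin G x y) : Twin G y x := h.symm

lemma twin_adj {x y w : Fin n} (h : Twin G x y) (hwx : w ≠ x) (hwy : w ≠ y) :
    G.Adj x w ↔ G.Adj y w := by
  constructor
  · intro ha
    have hm : w ∈ G.neighborSet x \ {y} := ⟨ha, by simpa using hwy⟩
    rw [h] at hm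
    exact hm.1
  · intro ha
    have hm : w ∈ G.neighborSet y \ {x} := ⟨ha, by simpa using hwx⟩
    rw [← h] at hm
    exact hm.1

lemma twin_iff {x y : Fin n} :
    Twin G x y ↔ ∀ w, w ≠ x → w ≠ y → (G.Adj x w ↔ G.Adj y w) := by
  constructor
  · intro h w hwx hwy; exact twin_adj h hwx hwy
  · intro h
    ext w
    simp only [Set.mem_diff, SimpleGraph.mem_neighborSet, Set.mem_singleton_iff]
    constructor
    · rintro ⟨haw, hwy⟩
      have hwx : w ≠ x := fun e => G.loopless.irrefl x (e ▸ haw)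
      exact ⟨(h w hwx hwy).mp haw, hwx⟩
    · rintro ⟨haw, hwx⟩
      have hwy : w ≠ y := fun e => G.loopless.irrefl y (e ▸ haw)
      exact ⟨(h w hwx hwy).mpr haw, hwy⟩

/-- A vertex cannot have both an adjacent twin and a nonadjacent twin. -/
lemma no_mixed {x a b : Fin n} (ha : Twin G x a) (hb : Twin G x b) (hax : a ≠ x) (hbx : b ≠ x)
    (hadj : G.Adj x a) (hnadj : ¬ G.Adj x b) : False := by
  have hab : a ≠ b := fun h => hnadj (h ▸ hadj)
  have h1 : G.Adj b a := (twin_adj hb hax hab).mp hadj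
  exact hnadj ((twin_adj ha hbx hab.symm).mpr h1.symm)

lemma twin_adj_iff {v a b : Fin n} (ha : Twin G v a) (hb : Twin G v b) (hav : a ≠ v)
    (hbv : b ≠ v) : (G.Adj v a ↔ G.Adj v b) := by
  constructor
  · intro h; by_contra hn; exact no_mixed ha hb hav hbv h hn
  · intro h; by_contra hn; exact no_mixed hb ha hbv hav h hn

lemma twin_trans {x y z : Fin n} (hxy : Twin G x y) (hyz : Twin G y z) : Twin G x z := by
  by_cases h1 : x = y
  · subst h1; exact hyz
  by_cases h2 : y = z
  · subst h2; exact hxy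
  rw [twin_iff]
  intro w hwx hwz
  by_cases hwy : w = y
  · subst hwy
    have h := twin_adj_iff (twin_symm hxy) hyz h1 (Ne.symm hwz)
    rw [G.adj_comm x w, G.adj_comm z w]
    exact h
  · exact (twin_adj hxy hwx hwy).trans (twin_adj hyz hwy hwz)


variable (G)

open Classical in
/-- The twin class of `v`, as a `Finset`. -/
noncomputable def cl (v : Fin n) : Finset (Fin n) :=
  Finset.univ.filter (fun u => Twin G u v)

variable {G}

open Classical in
lemma mem_cl {u v : Fin n} : u ∈ cl G v ↔ Twin G u v := by
  simp [cl]

lemma self_mem_cl (v : Fin n) : v ∈ cl G v := mem_cl.mpr (twin_refl v)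

lemma cl_eq_of_twin {w v : Fin n} (h : Twin G w v) : cl G w = cl G v := by
  ext u
  simp only [mem_cl]
  exact ⟨fun hu => twin_trans hu h, fun hu => twin_trans hu (twin_symm h)⟩

variable (G)

/-- Representative (minimum) of the twin class of `v`. -/
noncomputable def rep (v : Fin n) : Fin n := (cl G v).min' ⟨v, self_mem_cl v⟩

variable {G}

lemma rep_mem (v : Fin n) : rep G v ∈ cl G v := Finset.min'_mem _ _

lemma rep_twin (v : Fin n) : Twin G (rep G v) v := mem_cl.mp (rep_mem v)

lemma rep_eq_of_twin {w v : Fin n} (h : Twin G w v) : rep G w = rep G v := by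
  apply le_antisymm
  · exact Finset.min'_le _ _ (by rw [cl_eq_of_twin h]; exact rep_mem v)
  · exact Finset.min'_le _ _ (by rw [← cl_eq_of_twin h]; exact rep_mem w)

variable (G)

/-- Vector summing to zero on each twin class, nonzero everywhere (when classes have size ≥ 2). -/
noncomputable def zf (v : Fin n) : ℝ := if v = rep G v then 1 - ((cl G v).card : ℝ) else 1

variable {G}

lemma sum_zf (v : Fin n) : ∑ w ∈ cl G v, zf G w = 0 := by
  have hrep : rep G v ∈ cl G v := rep_mem v
  have step : ∀ w ∈ cl G v,
      zf G w = (if w = rep G v then -(((cl G v).card : ℝ)) else 0) + 1 := by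
    intro w hw
    have htw : Twin G w v := mem_cl.mp hw
    have h1 : rep G w = rep G v := rep_eq_of_twin htw
    have h2 : cl G w = cl G v := cl_eq_of_twin htw
    unfold zf
    rw [h1, h2]
    by_cases h : w = rep G v <;> simp [h] <;> try ring
  rw [Finset.sum_congr rfl step, Finset.sum_add_distrib,
    Finset.sum_ite_eq' (cl G v) (rep G v) (fun _ => -(((cl G v).card : ℝ)))]
  rw [if_pos hrep, Finset.sum_const, nsmul_eq_mul, mul_one]
  ring

lemma zf_ne (htwin : ∀ v : Fin n, ∃ u : Fin n, u ≠ v ∧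
      G.neighborSet u \ {v} = G.neighborSet v \ {u}) (v : Fin n) : zf G v ≠ 0 := by
  unfold zf
  by_cases h : v = rep G v
  · rw [if_pos h]
    obtain ⟨u, hu, ht⟩ := htwin v
    have hcard : 1 < (cl G v).card := by
      apply Finset.one_lt_card.mpr
      exact ⟨u, mem_cl.mpr ht, v, self_mem_cl v, hu⟩
    have : (2 : ℝ) ≤ ((cl G v).card : ℝ) := by exact_mod_cast hcard
    intro hc
    linarith
  · simp [h]

variable (G)

/-- `v` has an adjacent (true) twin. -/
def kap (v : Fin n) : Prop := ∃ u, u ≠ v ∧ Twin G u v ∧ G.Adj u v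

variable {G}

lemma adj_iff_kap {x y : Fin n} (h : Twin G x y) (hxy : x ≠ y) : G.Adj x y ↔ kap G x := by
  constructor
  · intro ha
    exact ⟨y, Ne.symm hxy, twin_symm h, ha.symm⟩
  · rintro ⟨u, hux, htux, haux⟩
    exact (twin_adj_iff (twin_symm htux) h hux (Ne.symm hxy)).mp haux.symm

lemma kap_congr {x y : Fin n} (h : Twin G x y) : kap G x ↔ kap G y := by
  by_cases hxy : x = y
  · rw [hxy]
  · rw [← adj_iff_kap h hxy, ← adj_iff_kap (twin_symm h) (Ne.symm hxy), G.adj_comm]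

variable (G)

/-- The support pattern of `A`. -/
def cc (x y : Fin n) : Prop := G.Adj x y ∨ (Twin G x y ∧ kap G x)

variable {G}

lemma cc_symm {x y : Fin n} : cc G x y ↔ cc G y x := by
  unfold cc
  constructor
  · rintro (h | ⟨ht, hk⟩)
    · exact Or.inl h.symm
    · exact Or.inr ⟨twin_symm ht, (kap_congr ht).mp hk⟩
  · rintro (h | ⟨ht, hk⟩)
    · exact Or.inl h.symm
    · exact Or.inr ⟨twin_symm ht, (kap_congr ht).mp hk⟩

lemma cc_self {x : Fin n} : cc G x x ↔ kap G x := by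
  simp [cc, twin_refl]

lemma cc_ne {x y : Fin n} (hxy : x ≠ y) : cc G x y ↔ G.Adj x y := by
  constructor
  · rintro (h | ⟨ht, hk⟩)
    · exact h
    · exact (adj_iff_kap ht hxy).mpr hk
  · exact Or.inl

lemma cc_of_twin {x w : Fin n} (h : Twin G x w) : cc G x w ↔ kap G x := by
  by_cases hxw : x = w
  · subst hxw; exact cc_self
  · rw [cc_ne hxw]; exact adj_iff_kap h hxw

lemma cc_congr_right {x w w' : Fin n} (h : Twin G w w') : cc G x w ↔ cc G x w' := by
  by_cases hww' : w = w'
  · rw [hww']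
  by_cases hT : Twin G x w
  · rw [cc_of_twin hT, cc_of_twin (twin_trans hT h)]
  · have hT' : ¬ Twin G x w' := fun h' => hT (twin_trans h' (twin_symm h))
    have hxw : x ≠ w := fun e => hT (e ▸ twin_refl x)
    have hxw' : x ≠ w' := fun e => hT' (e ▸ twin_refl x)
    rw [cc_ne hxw, cc_ne hxw', G.adj_comm x w, G.adj_comm x w']
    exact twin_adj h hxw hxw'

lemma cc_congr_left {w w' y : Fin n} (h : Twin G w w') : cc G w y ↔ cc G w' y := by
  rw [cc_symm, cc_congr_right h, ← cc_symm]

variable (G)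

open Classical in
/-- The `S(G)` matrix: columns constant on twin classes. -/
noncomputable def matA : Matrix (Fin n) (Fin n) ℝ := fun x y => if cc G x y then 1 else 0

open Classical in
/-- The `S(Gᶜ)` matrix: columns summing to zero on each twin class. -/
noncomputable def matB : Matrix (Fin n) (Fin n) ℝ :=
  fun x y => zf G x * zf G y * (if cc G x y then 0 else 1)

end CVaux

open CVaux

theorem stmt_8 {n : ℕ} (G : SimpleGraph (Fin n))
    (htwin : ∀ v : Fin n, ∃ u : Fin n, u ≠ v ∧
      G.neighborSet u \ {v} = G.neighborSet v \ {u}) :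
    CompVan G := by
  classical
  refine ⟨matA G, matB G, ⟨?_, ?_⟩, ⟨?_, ?_⟩, ?_⟩
  · -- A symmetric
    apply Matrix.IsSymm.ext
    intro i j
    simp only [matA]
    exact if_congr cc_symm rfl rfl
  · -- A pattern
    intro i j hij
    by_cases h : cc G i j
    · have ha : G.Adj i j := (cc_ne hij).mp h
      simp [matA, h, ha]
    · have ha : ¬ G.Adj i j := fun ha => h (Or.inl ha)
      simp [matA, h, ha]
  · -- B symmetric
    apply Matrix.IsSymm.ext
    intro i j
    simp only [matB]
    have e : (if cc G j i then (0:ℝ) else 1) = (if cc G i j then (0:ℝ) else 1) :=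
      if_congr cc_symm rfl rfl
    rw [e]; ring
  · -- B pattern
    intro i j hij
    by_cases h : cc G i j
    · have ha : G.Adj i j := (cc_ne hij).mp h
      simp [matB, h, SimpleGraph.compl_adj, ha]
    · have hna : ¬ G.Adj i j := fun ha => h (Or.inl ha)
      simp [matB, h, SimpleGraph.compl_adj, hij, hna, zf_ne htwin i, zf_ne htwin j]
  · -- A * B = 0
    ext x y
    rw [Matrix.mul_apply, Matrix.zero_apply]
    rw [← Finset.sum_fiberwise Finset.univ (rep G) (fun w => matA G x w * matB G w y)]
    apply Finset.sum_eq_zero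
    intro r _
    by_cases hex : ∃ w0, rep G w0 = r
    · obtain ⟨w0, hw0r⟩ := hex
      have hSeq : (Finset.univ.filter (fun w => rep G w = r)) = cl G w0 := by
        ext u
        simp only [Finset.mem_filter, Finset.mem_univ, true_and, mem_cl]
        constructor
        · intro hu
          have h1 : Twin G u (rep G u) := twin_symm (rep_twin u)
          rw [hu, ← hw0r] at h1
          exact twin_trans h1 (rep_twin w0)
        · intro hu
          rw [rep_eq_of_twin hu, hw0r]
      rw [hSeq]
      have key : ∀ w ∈ cl G w0,
          matA G x w * matB G w y
            = ((if cc G x w0 then (1:ℝ) else 0) *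
               ((if cc G w0 y then (0:ℝ) else 1) * zf G y)) * zf G w := by
        intro w hw
        have htw : Twin G w w0 := mem_cl.mp hw
        have e1 : (if cc G x w then (1:ℝ) else 0) = (if cc G x w0 then 1 else 0) :=
          if_congr (cc_congr_right htw) rfl rfl
        have e2 : (if cc G w y then (0:ℝ) else 1) = (if cc G w0 y then 0 else 1) :=
          if_congr (cc_congr_left htw) rfl rfl
        simp only [matA, matB]
        rw [e1, e2]
        ring
      rw [Finset.sum_congr rfl key, ← Finset.mul_sum, sum_zf w0, mul_zero]
    · have hempty : (Finset.univ.filter (fun w => rep G w = r)) = ∅ := by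
        rw [Finset.filter_eq_empty_iff]
        exact fun {w} _ hr => hex ⟨w, hr⟩
      rw [hempty, Finset.sum_empty]
end

section
/- Let G be a graph with A ∈ S(G) and B ∈ S(complement of G) satisfying AB = 0, and suppose a_ii = 0 for some vertex i. Then the graph H obtained from G by adding a new vertex j with N_H(j) = N_G(i) (j not adjacent to i) is complementary vanishing. -/
open Matrix Finset

namespace Matrix

variable {V W R : Type*} [CommSemiring R]

def weightedPullback (B : Matrix V V R) (f : W → V) (w u : W → R) (s : R) : Matrix W W R :=
  of fun x y => w x * B (f x) (f y) * w y + s * (u x * u y)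

@[simp]
theorem weightedPullback_apply (B : Matrix V V R) (f : W → V) (w u : W → R) (s : R) (x y : W) :
    B.weightedPullback f w u s x y = w x * B (f x) (f y) * w y + s * (u x * u y) :=
  rfl

theorem IsSymm.weightedPullback {B : Matrix V V R} (hB : B.IsSymm) (f : W → V) (w u : W → R)
    (s : R) : (B.weightedPullback f w u s).IsSymm := by
  ext x y
  simp only [transpose_apply, weightedPullback_apply, hB.apply (f x) (f y)]
  ring

theorem submatrix_mul_weightedPullback_eq_zero [Fintype V] [Fintype W] [DecidableEq V]
    {A B : Matrix V V R} (hAB : A * B = 0) (f : W → V) {w u : W → R}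
    (hw : ∀ a, ∑ z with f z = a, w z = 1) (hu : ∀ a, ∑ z with f z = a, u z = 0) (s : R) :
    A.submatrix f f * B.weightedPullback f w u s = 0 := by
  ext x y
  have hfiber : ∀ a, ∑ z with f z = a, A (f x) (f z) * B.weightedPullback f w u s z y
      = A (f x) a * B a (f y) * w y := by
    intro a
    calc _ = ∑ z with f z = a, (A (f x) a * B a (f y) * w y * w z + A (f x) a * s * u y * u z) :=
          sum_congr rfl fun z hz => by rw [weightedPullback_apply, (mem_filter.1 hz).2]; ring
      _ = A (f x) a * B a (f y) * w y := by
          rw [sum_add_distrib, ← mul_sum, ← mul_sum, hw, hu]; ring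
  calc _ = ∑ a, ∑ z with f z = a, A (f x) (f z) * B.weightedPullback f w u s z y := by
        rw [mul_apply, sum_fiberwise]; rfl
    _ = (A * B) (f x) (f y) * w y := by simp only [hfiber, mul_apply, sum_mul]
    _ = 0 := by simp [hAB]

end Matrix

theorem matIn_of_castSucc_of_last {n : ℕ} {H : SimpleGraph (Fin (n + 1))}
    {M : Matrix (Fin (n + 1)) (Fin (n + 1)) ℝ} (hM : M.IsSymm)
    (hcc : ∀ c d : Fin n, c ≠ d → (M c.castSucc d.castSucc ≠ 0 ↔ H.Adj c.castSucc d.castSucc))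
    (hlc : ∀ d : Fin n, M (Fin.last n) d.castSucc ≠ 0 ↔ H.Adj (Fin.last n) d.castSucc) :
    MatIn H M := by
  refine ⟨hM, fun x y hxy => ?_⟩
  induction x using Fin.lastCases with
  | last =>
    induction y using Fin.lastCases with
    | last => exact absurd rfl hxy
    | cast d => exact hlc d
  | cast c =>
    induction y using Fin.lastCases with
    | last => rw [hM.apply, H.adj_comm]; exact hlc c
    | cast d => exact hcc c d (ne_of_apply_ne _ hxy)

namespace Twin

variable {n : ℕ} (i : Fin n)

def fold : Fin (n + 1) → Fin n := Fin.lastCases i id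

def weight : Fin (n + 1) → ℝ := Fin.lastCases (-1) fun c => if c = i then 2 else 1

def diff : Fin (n + 1) → ℝ := Fin.lastCases (-1) fun c => if c = i then 1 else 0

@[simp] theorem fold_castSucc (c : Fin n) : fold i c.castSucc = c := by simp [fold]
@[simp] theorem fold_last : fold i (Fin.last n) = i := by simp [fold]

theorem weight_castSucc_ne_zero (c : Fin n) : weight i c.castSucc ≠ 0 := by
  simp only [weight, Fin.lastCases_castSucc]; split_ifs <;> norm_num

theorem diff_castSucc_mul_diff_castSucc {c d : Fin n} (hcd : c ≠ d) :
    diff i c.castSucc * diff i d.castSucc = 0 := by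
  simp only [diff, Fin.lastCases_castSucc]; split_ifs <;> simp_all

theorem sum_fold_eq {M : Type*} [AddCommMonoid M] (g : Fin (n + 1) → M) (a : Fin n) :
    ∑ z with fold i z = a, g z = g a.castSucc + if i = a then g (Fin.last n) else 0 := by
  rw [sum_filter, Fin.sum_univ_castSucc]
  simp

theorem sum_fold_weight (a : Fin n) : ∑ z with fold i z = a, weight i z = 1 := by
  rw [sum_fold_eq]
  by_cases h : i = a
  · subst h; norm_num [weight]
  · simp [weight, h, Ne.symm h]

theorem sum_fold_diff (a : Fin n) : ∑ z with fold i z = a, diff i z = 0 := by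
  rw [sum_fold_eq]
  by_cases h : i = a
  · subst h; norm_num [diff]
  · simp [diff, h, Ne.symm h]

variable {G : SimpleGraph (Fin n)} {H : SimpleGraph (Fin (n + 1))} {i}

theorem matIn_submatrix_fold {A : Matrix (Fin n) (Fin n) ℝ} (hA : MatIn G A) (hii : A i i = 0)
    (hH1 : ∀ x y : Fin n, H.Adj x.castSucc y.castSucc ↔ G.Adj x y)
    (hH2 : ∀ x : Fin n, H.Adj (Fin.last n) x.castSucc ↔ G.Adj i x) :
    MatIn H (A.submatrix (fold i) (fold i)) := by
  refine matIn_of_castSucc_of_last (hA.1.submatrix _) (fun c d hcd => ?_) (fun d => ?_)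
  · simpa [hH1] using hA.2 c d hcd
  · rw [submatrix_apply, fold_last, fold_castSucc, hH2]
    rcases eq_or_ne i d with rfl | hid
    · simp [hii]
    · exact hA.2 i d hid

theorem matIn_compl_weightedPullback_fold {B : Matrix (Fin n) (Fin n) ℝ} (hB : MatIn Gᶜ B)
    (hH1 : ∀ x y : Fin n, H.Adj x.castSucc y.castSucc ↔ G.Adj x y)
    (hH2 : ∀ x : Fin n, H.Adj (Fin.last n) x.castSucc ↔ G.Adj i x) :
    MatIn Hᶜ (B.weightedPullback (fold i) (weight i) (diff i) (-1 - 2 * B i i)) := by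
  refine matIn_of_castSucc_of_last (hB.1.weightedPullback _ _ _ _)
    (fun c d hcd => ?_) (fun d => ?_)
  · rw [weightedPullback_apply, fold_castSucc, fold_castSucc,
      diff_castSucc_mul_diff_castSucc i hcd, mul_zero, add_zero, mul_ne_zero_iff,
      mul_ne_zero_iff, and_iff_right (weight_castSucc_ne_zero i c),
      and_iff_left (weight_castSucc_ne_zero i d), hB.2 c d hcd]
    simp [hH1, hcd]
  · have hne : Fin.last n ≠ d.castSucc := (Fin.castSucc_lt_last d).ne'
    rw [weightedPullback_apply, fold_last, fold_castSucc, SimpleGraph.compl_adj, hH2]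
    rcases eq_or_ne d i with rfl | hdi
    · norm_num [weight, diff, hne]
      ring_nf
      exact one_ne_zero
    · simpa [weight, diff, hdi, hne, hdi.symm] using hB.2 i d hdi.symm

end Twin

theorem stmt_9 {n : ℕ} (G : SimpleGraph (Fin n)) (A B : Matrix (Fin n) (Fin n) ℝ)
    (hA : MatIn G A) (hB : MatIn Gᶜ B) (hAB : A * B = 0) (i : Fin n) (hii : A i i = 0)
    (H : SimpleGraph (Fin (n + 1)))
    (hH1 : ∀ x y : Fin n, H.Adj x.castSucc y.castSucc ↔ G.Adj x y)
    (hH2 : ∀ x : Fin n, H.Adj (Fin.last n) x.castSucc ↔ G.Adj i x) :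
    CompVan H :=
  ⟨A.submatrix (Twin.fold i) (Twin.fold i),
    B.weightedPullback (Twin.fold i) (Twin.weight i) (Twin.diff i) (-1 - 2 * B i i),
    Twin.matIn_submatrix_fold hA hii hH1 hH2, Twin.matIn_compl_weightedPullback_fold hB hH1 hH2,
    submatrix_mul_weightedPullback_eq_zero hAB _ (Twin.sum_fold_weight i) (Twin.sum_fold_diff i) _⟩
end

section
/- If B is a real m×n matrix with no row equal to the zero vector, then the column space of B contains a vector with all entries nonzero. -/
/-! Each row of `B` is a nonzero linear functional on `ℝⁿ`, so its kernel is a proper subspace.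
A real vector space is not a finite union of proper subspaces, so some `c` lies outside every
kernel, and `B *ᵥ c` is a nowhere-zero vector of the column space. -/

open Matrix

theorem Module.Dual.exists_forall_apply_ne_zero {K V ι : Type*} [Field K] [Infinite K]
    [AddCommGroup V] [Module K V] [Finite ι] (f : ι → Module.Dual K V) (hf : ∀ i, f i ≠ 0) :
    ∃ v, ∀ i, f i v ≠ 0 := by
  have hcover : ⋃ i, (LinearMap.ker (f i) : Set V) ≠ Set.univ := fun hunion => by
    obtain ⟨i, hi⟩ := Subspace.exists_eq_top_of_iUnion_eq_univ hunion
    exact hf i (LinearMap.ker_eq_top.mp hi)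
  obtain ⟨v, hv⟩ := (Set.ne_univ_iff_exists_notMem _).mp hcover
  simp only [Set.mem_iUnion, SetLike.mem_coe, LinearMap.mem_ker, not_exists] at hv
  exact ⟨v, hv⟩

theorem Matrix.exists_mulVec_forall_ne_zero {K m n : Type*} [Field K] [Infinite K]
    [Fintype m] [Fintype n] [DecidableEq n] (B : Matrix m n K) (hB : ∀ i, ∃ j, B i j ≠ 0) :
    ∃ c, ∀ i, (B *ᵥ c) i ≠ 0 := by
  have hrow : ∀ i, (LinearMap.proj i).comp B.mulVecLin ≠ 0 := fun i hzero => by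
    obtain ⟨j, hj⟩ := hB i
    apply hj
    simpa [mulVec_single] using LinearMap.congr_fun hzero (Pi.single j 1)
  exact Module.Dual.exists_forall_apply_ne_zero _ hrow

theorem stmt_13 {m n : ℕ} (B : Matrix (Fin m) (Fin n) ℝ)
    (hB : ∀ i, ∃ j, B i j ≠ 0) :
    ∃ v ∈ Submodule.span ℝ (Set.range (fun j i => B i j)), ∀ i, v i ≠ 0 := by
  obtain ⟨c, hc⟩ := B.exists_mulVec_forall_ne_zero hB
  refine ⟨B *ᵥ c, ?_, hc⟩
  change B *ᵥ c ∈ Submodule.span ℝ (Set.range B.col)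
  rw [← range_mulVecLin]
  exact LinearMap.mem_range_self _ c
end

section
/- Let G be a graph. If there exist A ∈ S(G), B ∈ S(complement of G), and a nowhere-zero vector x such that AB = 0 and Bx is nowhere-zero, then the disjoint union G ⊔ K_1 is β-robust. -/
/-- `G` is α-robust. -/
def AlphaRobust {V : Type*} [Fintype V] (G : SimpleGraph V) : Prop :=
  ∃ A B : Matrix V V ℝ, MatIn G A ∧ MatIn Gᶜ B ∧ A * B = 0 ∧
    ∃ x : V → ℝ, A.mulVec x = 0 ∧ ∀ i, x i ≠ 0

/-- `G` is β-robust. -/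
def BetaRobust {V : Type*} [Fintype V] (G : SimpleGraph V) : Prop :=
  ∃ A B : Matrix V V ℝ, MatIn G A ∧ MatIn Gᶜ B ∧ A * B = 0 ∧
    ∃ x : V → ℝ, B.mulVec x = 0 ∧ ∀ i, x i ≠ 0

theorem stmt_15 {n : ℕ} (G : SimpleGraph (Fin n)) (A B : Matrix (Fin n) (Fin n) ℝ)
    (hA : MatIn G A) (hB : MatIn Gᶜ B) (hAB : A * B = 0)
    (x : Fin n → ℝ) (hx : ∀ i, x i ≠ 0) (hBx : ∀ i, B.mulVec x i ≠ 0) :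
    BetaRobust (G ⊕g (⊥ : SimpleGraph (Fin 1))) := by
  classical
  set v := B.mulVec x with hv
  set C : Matrix (Fin n) (Fin 1) ℝ := fun i _ => v i with hC
  set D : Matrix (Fin 1) (Fin 1) ℝ := fun _ _ => (∑ k, x k * v k) with hD
  refine ⟨Matrix.fromBlocks A 0 0 0, Matrix.fromBlocks B C C.transpose D, ?_, ?_, ?_, ?_⟩
  · constructor
    · unfold Matrix.IsSymm
      rw [Matrix.fromBlocks_transpose, hA.1]
      simp
    · rintro (i | i) (j | j) hij
      · have : i ≠ j := by simpa using hij
        simpa using hA.2 i j this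
      · simp
      · simp
      · exact (hij (by rw [Subsingleton.elim i j])).elim
  · constructor
    · unfold Matrix.IsSymm
      rw [Matrix.fromBlocks_transpose, hB.1]
      simp [hD, Matrix.IsSymm]
      congr 1
    · rintro (i | i) (j | j) hij
      · have hne : i ≠ j := by simpa using hij
        have := hB.2 i j hne
        simpa [SimpleGraph.compl_adj, hne] using this
      · rw [Matrix.fromBlocks_apply₁₂]; simpa [hC, SimpleGraph.compl_adj] using hBx i
      · rw [Matrix.fromBlocks_apply₂₁, Matrix.transpose_apply]; simpa [hC, Matrix.transpose_apply, SimpleGraph.compl_adj] using hBx j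
      · exact (hij (by rw [Subsingleton.elim i j])).elim
  · rw [Matrix.fromBlocks_multiply]
    have hAC : A * C = 0 := by
      ext i j
      have : (A * C) i j = A.mulVec v i := by
        rw [Matrix.mul_apply]; simp [Matrix.mulVec, dotProduct, hC]
      rw [this]
      have : A.mulVec v = 0 := by
        rw [hv, Matrix.mulVec_mulVec, hAB]
        simp
      rw [this]; rfl
    simp [hAB, hAC]
  · refine ⟨Sum.elim x (fun _ => -1), ?_, ?_⟩
    · rw [Matrix.fromBlocks_mulVec]
      simp only [Sum.elim_comp_inl, Sum.elim_comp_inr]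
      have h1 : C.mulVec (fun _ => (-1 : ℝ)) = -v := by
        ext i
        simp [Matrix.mulVec, dotProduct, hC]
      have h2 : C.transpose.mulVec x = fun _ => (∑ k, x k * v k) := by
        ext i
        simp only [Matrix.mulVec, dotProduct, Matrix.transpose_apply]; simp [hC, mul_comm]
      have h3 : D.mulVec (fun _ => (-1 : ℝ)) = fun _ => -((∑ k, x k * v k)) := by
        ext i
        simp [Matrix.mulVec, dotProduct, hD]
      rw [h1, h2, h3]
      ext (i | i) <;> simp [hv]
    · rintro (i | i)
      · exact hx i
      · simp
end

section
/- If G is complementary vanishing and has no dominating vertex, then the disjoint union G ⊔ K_1 is β-robust; in particular G ⊔ K_1 is complementary vanishing. -/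
/-!
Take `A ∈ S(G)`, `B ∈ S(Gᶜ)` with `AB = 0`. Since `G` has no dominating vertex, every row of `B`
has a nonzero entry, so a generic vector `w` avoids finitely many hyperplanes: both `w` and
`b = Bw` are nowhere zero. Border the matrices by the isolated vertex, which is adjacent to every
other vertex in the complement: `A' = A ⊕ 0` and `B' = [[B, b], [bᵀ, bᵀw]]`. Then `A'B' = 0`
because `Ab = ABw = 0`, `B' ∈ S((G ⊔ K₁)ᶜ)` because `b` is nowhere zero, and `(-w, 1) ∈ ker B'`.
-/

open Matrix

lemma Matrix.exists_forall_ne_zero_forall_mulVec_ne_zero {m n K : Type*} [Field K] [Infinite K]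
    [Finite m] [Fintype n] (B : Matrix m n K) (hB : ∀ i, ∃ j, B i j ≠ 0) :
    ∃ w : n → K, (∀ j, w j ≠ 0) ∧ ∀ i, (B *ᵥ w) i ≠ 0 := by
  classical
  let f : n ⊕ m → Module.Dual K (n → K) :=
    Sum.elim (fun j => LinearMap.proj j) (fun i => LinearMap.proj i ∘ₗ B.mulVecLin)
  obtain ⟨w, hw⟩ := Module.Dual.exists_forall_ne_zero_of_forall_exists f <| by
    rintro (j | i)
    · exact ⟨Pi.single j 1, by simp [f]⟩
    · obtain ⟨j, hj⟩ := hB i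
      exact ⟨Pi.single j 1, by simpa [f, mulVec_single] using hj⟩
  exact ⟨w, fun j => hw (.inl j), fun i => hw (.inr i)⟩

section

variable {V W : Type*} [Fintype V] [Fintype W]

lemma MatIn.apply_ne_zero_of_not_adj {G : SimpleGraph V} {B : Matrix V V ℝ} (hB : MatIn Gᶜ B)
    {v u : V} (hne : u ≠ v) (hnadj : ¬ G.Adj v u) : B v u ≠ 0 :=
  (hB.2 v u hne.symm).2 ⟨hne.symm, hnadj⟩

lemma MatIn.of_subsingleton [Subsingleton V] (G : SimpleGraph V) {A : Matrix V V ℝ}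
    (hA : A.IsSymm) : MatIn G A :=
  ⟨hA, fun i j hij => (hij (Subsingleton.elim i j)).elim⟩

lemma MatIn.fromBlocks_zero {G : SimpleGraph V} {H : SimpleGraph W} {A : Matrix V V ℝ}
    {D : Matrix W W ℝ} (hA : MatIn G A) (hD : MatIn H D) :
    MatIn (G ⊕g H) (fromBlocks A 0 0 D) := by
  refine ⟨hA.1.fromBlocks (by simp) hD.1, ?_⟩
  rintro (i | i) (j | j) hne
  · simpa using hA.2 i j (by simpa using hne)
  · simp
  · simp
  · simpa using hD.2 i j (by simpa using hne)

lemma MatIn.fromBlocks_compl {G : SimpleGraph V} {H : SimpleGraph W} {B : Matrix V V ℝ}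
    {C : Matrix V W ℝ} {D : Matrix W W ℝ} (hB : MatIn Gᶜ B) (hD : MatIn Hᶜ D)
    (hC : ∀ i j, C i j ≠ 0) : MatIn (G ⊕g H)ᶜ (fromBlocks B C Cᵀ D) := by
  refine ⟨hB.1.fromBlocks rfl hD.1, ?_⟩
  rintro (i | i) (j | j) hne
  · simpa using hB.2 i j (by simpa using hne)
  · simpa using hC i j
  · simpa using hC j i
  · simpa using hD.2 i j (by simpa using hne)

lemma BetaRobust.compVan {G : SimpleGraph V} (h : BetaRobust G) : CompVan G :=
  let ⟨A, B, hA, hB, hAB, _⟩ := h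
  ⟨A, B, hA, hB, hAB⟩

lemma betaRobust_sum_of_mulVec_ne_zero [Unique W]
    {G : SimpleGraph V} {A B : Matrix V V ℝ} (hA : MatIn G A) (hB : MatIn Gᶜ B) (hAB : A * B = 0)
    {w : V → ℝ} (hw : ∀ i, w i ≠ 0) (hBw : ∀ i, (B *ᵥ w) i ≠ 0) :
    BetaRobust (G ⊕g (⊥ : SimpleGraph W)) := by
  set b := B *ᵥ w
  let C : Matrix V W ℝ := replicateCol W b
  have hAC : A * C = 0 := by
    rw [← replicateCol_mulVec, mulVec_mulVec, hAB, zero_mulVec, replicateCol_zero]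
  refine ⟨fromBlocks A 0 0 0, fromBlocks B C Cᵀ (of fun _ _ => b ⬝ᵥ w),
    hA.fromBlocks_zero (.of_subsingleton _ (by simp)),
    hB.fromBlocks_compl (.of_subsingleton _ rfl) (fun i _ => hBw i), ?_,
    Sum.elim (-w) 1, ?_, ?_⟩
  · simp [fromBlocks_multiply, hAB, hAC]
  · ext (i | i) <;> simp [C, mulVec, dotProduct, b]
  · rintro (i | i)
    · simpa using hw i
    · simp

end

theorem stmt_16 {n : ℕ} (G : SimpleGraph (Fin n)) (h : CompVan G)
    (hdom : ¬ ∃ v : Fin n, ∀ u, u ≠ v → G.Adj v u) :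
    BetaRobust (G ⊕g (⊥ : SimpleGraph (Fin 1))) ∧
    CompVan (G ⊕g (⊥ : SimpleGraph (Fin 1))) := by
  obtain ⟨A, B, hA, hB, hAB⟩ := h
  push Not at hdom
  have hrow : ∀ v, ∃ u, B v u ≠ 0 := fun v =>
    let ⟨u, hne, hnadj⟩ := hdom v
    ⟨u, hB.apply_ne_zero_of_not_adj hne hnadj⟩
  obtain ⟨w, hw, hBw⟩ := B.exists_forall_ne_zero_forall_mulVec_ne_zero hrow
  have hβ := betaRobust_sum_of_mulVec_ne_zero (W := Fin 1) hA hB hAB hw hBw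
  exact ⟨hβ, hβ.compVan⟩
end

section
/- The path P_3 disjoint union with P_2 (the 5-vertex graph with components a path on 3 vertices and an edge) is not complementary vanishing, even though all but one of its vertices has a twin. -/
/-!
A leaf `u` of `G` with neighbour `w` prevents complementary vanishing as soon as `w` has a
neighbour `x ≠ u` and a non-neighbour `y ≠ w`. If `A ∈ S(G)`, `B ∈ S(Gᶜ)` and `AB = 0`,
row `u` of `A` is supported on `{u, w}`, so `A u u * B u j + A u w * B w j = 0` for all `j`.
At `j = x` the second term vanishes (`w ~ x` in `G`) while `B u x ≠ 0`, forcing `A u u = 0`;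
at `j = y` this leaves `A u w * B w y = 0` with both factors nonzero.
-/

namespace MatIn

variable {V : Type*} [Fintype V] {G : SimpleGraph V} {A : Matrix V V ℝ}

theorem apply_eq_zero (hA : MatIn G A) {i j : V} (hij : i ≠ j) (h : ¬G.Adj i j) : A i j = 0 :=
  not_not.mp fun hne => h ((hA.2 i j hij).mp hne)

theorem apply_ne_zero (hA : MatIn G A) {i j : V} (h : G.Adj i j) : A i j ≠ 0 :=
  (hA.2 i j h.ne).mpr h

theorem apply_eq_zero_of_adj (hB : MatIn Gᶜ A) {i j : V} (h : G.Adj i j) : A i j = 0 :=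
  hB.apply_eq_zero h.ne fun hc => hc.2 h

theorem apply_ne_zero_of_not_adj_s17 (hB : MatIn Gᶜ A) {i j : V} (hij : i ≠ j) (h : ¬G.Adj i j) :
    A i j ≠ 0 :=
  hB.apply_ne_zero ⟨hij, h⟩

theorem mul_apply_of_leaf (hA : MatIn G A) {u w : V} (hu : ∀ k, G.Adj u k ↔ k = w)
    (B : Matrix V V ℝ) (j : V) : (A * B) u j = A u u * B u j + A u w * B w j := by
  have huw : u ≠ w := ((hu w).mpr rfl).ne
  refine Fintype.sum_eq_add u w huw fun k ⟨hku, hkw⟩ => ?_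
  exact mul_eq_zero_of_left (hA.apply_eq_zero hku.symm (mt (hu k).mp hkw)) _

end MatIn

theorem not_compVan_of_leaf {V : Type*} [Fintype V] {G : SimpleGraph V} {u w x y : V}
    (hu : ∀ k, G.Adj u k ↔ k = w) (hwx : G.Adj w x) (hxu : x ≠ u)
    (hyw : y ≠ w) (hwy : ¬G.Adj w y) : ¬CompVan G := by
  rintro ⟨A, B, hA, hB, hAB⟩
  have hrow : ∀ j, A u u * B u j + A u w * B w j = 0 := fun j => by
    rw [← hA.mul_apply_of_leaf hu, hAB, Matrix.zero_apply]
  have hAuu : A u u = 0 := by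
    have hBux : B u x ≠ 0 := hB.apply_ne_zero_of_not_adj_s17 hxu.symm (mt (hu x).mp hwx.ne.symm)
    simpa [hB.apply_eq_zero_of_adj hwx, hBux] using hrow x
  have hAuw : A u w ≠ 0 := hA.apply_ne_zero ((hu w).mpr rfl)
  have hBwy : B w y ≠ 0 := hB.apply_ne_zero_of_not_adj_s17 hyw.symm hwy
  simpa [hAuu, hAuw, hBwy] using hrow y

theorem stmt_17 :
    ¬ CompVan (SimpleGraph.fromEdgeSet {s(0, 1), s(1, 2), s(3, 4)} : SimpleGraph (Fin 5)) ∧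
    ∀ v : Fin 5, v ≠ 1 → ∃ u : Fin 5, u ≠ v ∧
      (SimpleGraph.fromEdgeSet {s(0, 1), s(1, 2), s(3, 4)} : SimpleGraph (Fin 5)).neighborSet u \ {v}
        = (SimpleGraph.fromEdgeSet {s(0, 1), s(1, 2), s(3, 4)} : SimpleGraph (Fin 5)).neighborSet v \ {u} := by
  refine ⟨not_compVan_of_leaf (u := 0) (w := 1) (x := 2) (y := 3)
    (fun k => by fin_cases k <;> simp) (by simp) (by decide) (by decide) (by simp), ?_⟩
  intro v hv
  fin_cases v
  · exact ⟨2, by decide, by ext w; fin_cases w <;> simp⟩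
  · exact absurd rfl hv
  · exact ⟨0, by decide, by ext w; fin_cases w <;> simp⟩
  · exact ⟨4, by decide, by ext w; fin_cases w <;> simp⟩
  · exact ⟨3, by decide, by ext w; fin_cases w <;> simp⟩
end
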